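/- (Zarankiewicz) If (X,d) is a separable metric space, then every sequence {C_n} of closed subsets of X admits a subsequence that converges in the Kuratowski sense to some closed set C ⊆ X. -/

import Mathlib

/-!
Both `q ↦ limsup_n d(q, C_n)` and `q ↦ liminf_n d(q, C_n)` change by at most `d(q, p)` when `q`
is replaced by `p`. Since `[0, ∞]^S` is compact and metrizable for a countable dense `S`, some
subsequence makes `d(s, C_n)` converge for every `s ∈ S`, so that limsup and liminf agree on `S`;
the two estimates then force `Ls ⊆ Li` on the closure of `S`, which is everything. The first
estimate also shows that `Li` is always closed.
-/

/-- Kuratowski limit inferior: points `q` with `limsup_n d(q, C_n) = 0` (d(q,∅)=+∞). -/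
def kurLi {X : Type*} [MetricSpace X] (C : ℕ → Set X) : Set X :=
  {q | Filter.limsup (fun n => EMetric.infEdist q (C n)) Filter.atTop = 0}

/-- Kuratowski limit superior: points `q` with `liminf_n d(q, C_n) = 0` (d(q,∅)=+∞). -/
def kurLs {X : Type*} [MetricSpace X] (C : ℕ → Set X) : Set X :=
  {q | Filter.liminf (fun n => EMetric.infEdist q (C n)) Filter.atTop = 0}

open Filter Metric Topology

section infEDist

variable {X ι : Type*} [PseudoEMetricSpace X] {l : Filter ι} [l.NeBot] (C : ι → Set X) (p q : X)

theorem limsup_infEDist_le_add_edist :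
    limsup (fun n => infEDist q (C n)) l ≤ limsup (fun n => infEDist p (C n)) l + edist q p := by
  rw [← limsup_add_const l _ _ (by isBoundedDefault) (by isBoundedDefault)]
  exact limsup_le_limsup (Eventually.of_forall fun _ => infEDist_le_infEDist_add_edist)

theorem liminf_infEDist_le_add_edist :
    liminf (fun n => infEDist q (C n)) l ≤ liminf (fun n => infEDist p (C n)) l + edist q p := by
  rw [← liminf_add_const l _ _ (by isBoundedDefault) (by isBoundedDefault)]
  exact liminf_le_liminf (Eventually.of_forall fun _ => infEDist_le_infEDist_add_edist)

end infEDist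

section Kuratowski

variable {X : Type*} [MetricSpace X]

theorem mem_kurLi_iff {C : ℕ → Set X} {q : X} :
    q ∈ kurLi C ↔ limsup (fun n => infEDist q (C n)) atTop = 0 := Iff.rfl

theorem mem_kurLs_iff {C : ℕ → Set X} {q : X} :
    q ∈ kurLs C ↔ liminf (fun n => infEDist q (C n)) atTop = 0 := Iff.rfl

theorem kurLi_subset_kurLs (C : ℕ → Set X) : kurLi C ⊆ kurLs C := fun q hq =>
  le_antisymm (le_of_le_of_eq liminf_le_limsup hq) bot_le

theorem isClosed_kurLi (C : ℕ → Set X) : IsClosed (kurLi C) := by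
  refine closure_subset_iff_isClosed.mp fun q hq => mem_kurLi_iff.mpr (le_antisymm ?_ bot_le)
  have hbound := le_on_closure (f := fun _ => limsup (fun n => infEDist q (C n)) atTop)
    (g := edist q) (fun p hp => by
      simpa [mem_kurLi_iff.mp hp] using limsup_infEDist_le_add_edist (l := atTop) C p q)
    continuousOn_const (continuous_const.edist continuous_id).continuousOn hq
  simpa using hbound

theorem kurLs_subset_kurLi_of_dense {C : ℕ → Set X} {S : Set X} (hS : Dense S)
    (hconv : ∀ s ∈ S, ∃ L, Tendsto (fun n => infEDist s (C n)) atTop (𝓝 L)) :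
    kurLs C ⊆ kurLi C := by
  intro q hq
  rw [mem_kurLs_iff] at hq
  refine mem_kurLi_iff.mpr (le_antisymm ?_ bot_le)
  have hbound := le_on_closure (f := fun _ => limsup (fun n => infEDist q (C n)) atTop)
    (g := fun s => edist s q + edist q s) (fun s hs => by
      obtain ⟨L, hL⟩ := hconv s hs
      calc limsup (fun n => infEDist q (C n)) atTop
          ≤ limsup (fun n => infEDist s (C n)) atTop + edist q s :=
            limsup_infEDist_le_add_edist C s q
        _ = liminf (fun n => infEDist s (C n)) atTop + edist q s := by
            rw [hL.limsup_eq, hL.liminf_eq]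
        _ ≤ liminf (fun n => infEDist q (C n)) atTop + edist s q + edist q s := by
            gcongr; exact liminf_infEDist_le_add_edist C q s
        _ = edist s q + edist q s := by rw [hq, zero_add])
    continuousOn_const (by fun_prop) (hS.closure_eq ▸ Set.mem_univ q)
  simpa using hbound

end Kuratowski

theorem statement7_general {X : Type*} [MetricSpace X] [TopologicalSpace.SeparableSpace X]
    (C : ℕ → Set X) :
    ∃ φ : ℕ → ℕ, StrictMono φ ∧ ∃ D : Set X, IsClosed D ∧
      kurLi (fun k => C (φ k)) = D ∧ kurLs (fun k => C (φ k)) = D := by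
  obtain ⟨S, hS_count, hS_dense⟩ := TopologicalSpace.exists_countable_dense X
  have := hS_count.to_subtype
  obtain ⟨L, φ, hφ, hL⟩ := CompactSpace.tendsto_subseq fun n (s : S) => infEDist (s : X) (C n)
  refine ⟨φ, hφ, _, isClosed_kurLi _, rfl, ?_⟩
  refine (kurLs_subset_kurLi_of_dense hS_dense fun s hs => ?_).antisymm (kurLi_subset_kurLs _)
  exact ⟨L ⟨s, hs⟩, tendsto_pi_nhds.mp hL ⟨s, hs⟩⟩

/-- (Zarankiewicz) In a separable metric space, every sequence of closed sets has a
subsequence converging in the Kuratowski sense to a closed set. -/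
theorem statement7 {X : Type*} [MetricSpace X] [TopologicalSpace.SeparableSpace X]
    (C : ℕ → Set X) (hC : ∀ n, IsClosed (C n)) :
    ∃ φ : ℕ → ℕ, StrictMono φ ∧ ∃ D : Set X, IsClosed D ∧
      kurLi (fun k => C (φ k)) = D ∧ kurLs (fun k => C (φ k)) = D :=
  statement7_general C
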